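/- Let 0 ≤ q̂ ≤ q < 1 and let c ≥ 0. If kl(q̂ ‖ q) ≤ c, then q ≤ ( √( q̂ + c/2 ) + √( c/2 ) )², where kl(q̂ ‖ q) = q̂·log(q̂/q) + (1-q̂)·log((1-q̂)/(1-q)) is the binary Kullback-Leibler divergence between Bernoulli distributions with parameters q̂ and q (with the convention 0·log 0 = 0). -/

import Mathlib

/-- Binary Kullback-Leibler divergence between Bernoulli parameters `p` and `q`:
`kl(p ‖ q) = p·log(p/q) + (1-p)·log((1-p)/(1-q))`. Note that the convention
`0·log 0 = 0` holds automatically since in Lean `Real.log 0 = 0` and `0 * x = 0`. -/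
noncomputable def klBin (p q : ℝ) : ℝ :=
  p * Real.log (p / q) + (1 - p) * Real.log ((1 - p) / (1 - q))

/-!
The heart of the argument is the Pinsker-type bound `(q - q̂)² ≤ 2 q · kl(q̂ ‖ q)` for `q̂ ≤ q`.
It follows term by term from two elementary bounds on the logarithm: `log x ≥ (x - x⁻¹) / 2`
on `(0, 1]` (i.e. `sinh u ≤ u` for `u ≤ 0`) for the first summand of `kl`, and
`log y ≥ 1 - y⁻¹` for the second; the two lower bounds add up to exactly `(q - q̂)² / (2q)`.
Then `q - q̂ ≤ 2 √(c/2) √q`, a quadratic inequality in `√q` whose larger root is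
`√(q̂ + c/2) + √(c/2)`.
-/

open Real

lemma sub_inv_div_two_le_log {x : ℝ} (hx₀ : 0 < x) (hx₁ : x ≤ 1) : (x - x⁻¹) / 2 ≤ log x := by
  rw [← sinh_log hx₀]
  exact sinh_le_self_iff.2 (log_nonpos hx₀.le hx₁)

lemma sq_sub_sq_le_two_mul_mul_log_div {p q : ℝ} (hp : 0 ≤ p) (hpq : p ≤ q) :
    p ^ 2 - q ^ 2 ≤ 2 * q * (p * log (p / q)) := by
  rcases hp.eq_or_lt with rfl | hp
  · simp only [zero_mul, mul_zero]
    nlinarith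
  have hq : 0 < q := hp.trans_le hpq
  calc p ^ 2 - q ^ 2 = 2 * q * (p * ((p / q - (p / q)⁻¹) / 2)) := by
        field_simp
    _ ≤ 2 * q * (p * log (p / q)) := by
        gcongr
        exact sub_inv_div_two_le_log (div_pos hp hq) (div_le_one_of_le₀ hpq hq.le)

lemma sub_le_mul_log_one_sub_div {p q : ℝ} (hpq : p ≤ q) (hq : q < 1) :
    q - p ≤ (1 - p) * log ((1 - p) / (1 - q)) := by
  have hq' : 0 < 1 - q := sub_pos.2 hq
  have hp' : 0 < 1 - p := by linarith
  calc q - p = (1 - p) * (1 - ((1 - p) / (1 - q))⁻¹) := by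
        field_simp
        ring
    _ ≤ (1 - p) * log ((1 - p) / (1 - q)) := by
        gcongr
        exact one_sub_inv_le_log_of_pos (div_pos hp' hq')

lemma sq_sub_le_two_mul_klBin {p q : ℝ} (hp : 0 ≤ p) (hpq : p ≤ q) (hq : q < 1) :
    (q - p) ^ 2 ≤ 2 * q * klBin p q := by
  have h₁ := sq_sub_sq_le_two_mul_mul_log_div hp hpq
  have h₂ := mul_le_mul_of_nonneg_left (sub_le_mul_log_one_sub_div hpq hq)
    (by linarith : 0 ≤ 2 * q)
  unfold klBin
  linarith

lemma le_sq_sqrt_add_sqrt_of_sq_sub_le {a b q : ℝ} (hb : 0 ≤ b) (hq : 0 ≤ q)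
    (h : (q - a) ^ 2 ≤ 4 * b * q) : q ≤ (√(a + b) + √b) ^ 2 := by
  have hsq : √q ^ 2 = q := sq_sqrt hq
  have hsb : √b ^ 2 = b := sq_sqrt hb
  have hlin : q - a ≤ 2 * √b * √q := by
    refine (abs_le_of_sq_le_sq' ?_ (by positivity)).2
    rw [mul_pow, mul_pow, hsq, hsb]
    linarith
  have hroot : √q - √b ≤ √(a + b) :=
    (le_abs_self _).trans (abs_le_sqrt (by nlinarith))
  calc q = √q ^ 2 := hsq.symm
    _ ≤ (√(a + b) + √b) ^ 2 := pow_le_pow_left₀ (sqrt_nonneg q) (by linarith) 2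

/-- Full binary KL inversion: if `0 ≤ q̂ ≤ q < 1`, `c ≥ 0` and `kl(q̂ ‖ q) ≤ c`,
then `q ≤ (√(q̂ + c/2) + √(c/2))²`. -/
theorem binary_kl_inversion_quadratic (qhat q c : ℝ)
    (hqhat : 0 ≤ qhat) (hle : qhat ≤ q) (hq1 : q < 1) (hc : 0 ≤ c)
    (h : klBin qhat q ≤ c) :
    q ≤ (Real.sqrt (qhat + c / 2) + Real.sqrt (c / 2)) ^ 2 := by
  have hq : 0 ≤ q := hqhat.trans hle
  refine le_sq_sqrt_add_sqrt_of_sq_sub_le (by positivity) hq ?_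
  calc (q - qhat) ^ 2 ≤ 2 * q * klBin qhat q := sq_sub_le_two_mul_klBin hqhat hle hq1
    _ ≤ 2 * q * c := by gcongr
    _ = 4 * (c / 2) * q := by ring
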